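/- arXiv:2210.03294 — 9 statements merged into one kernel-verified Lean document; each statement's English description precedes it below -/
import Mathlib

section
/- For all vectors x, y in R^d, the squared Frobenius norm ‖I - x yᵀ x yᵀ‖_F² equals d - 1 + ((xᵀy)² - 1)² + (xᵀy)² (‖x‖²‖y‖² - (xᵀy)²), and in particular ‖I - x yᵀ x yᵀ‖_F² ≥ d - 1. -/
open Finset

/-- The squared Frobenius norm of `I - x yᵀ x yᵀ` equals
`d - 1 + ((xᵀy)² - 1)² + (xᵀy)² (‖x‖²‖y‖² - (xᵀy)²)`, hence is at least `d - 1`. -/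
theorem frobenius_identity_and_lower_bound (d : ℕ) (x y : Fin d → ℝ) :
    (∑ i, ∑ j, ((1 : Matrix (Fin d) (Fin d) ℝ) -
        Matrix.vecMulVec x y * Matrix.vecMulVec x y) i j ^ 2)
      = (d : ℝ) - 1 + ((∑ i, x i * y i) ^ 2 - 1) ^ 2
        + (∑ i, x i * y i) ^ 2 *
          ((∑ i, x i ^ 2) * (∑ i, y i ^ 2) - (∑ i, x i * y i) ^ 2)
    ∧ (d : ℝ) - 1 ≤
      ∑ i, ∑ j, ((1 : Matrix (Fin d) (Fin d) ℝ) -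
        Matrix.vecMulVec x y * Matrix.vecMulVec x y) i j ^ 2 := by
  set c : ℝ := ∑ i, x i * y i with hc
  have key : ∀ i j, ((1 : Matrix (Fin d) (Fin d) ℝ) -
        Matrix.vecMulVec x y * Matrix.vecMulVec x y) i j
      = (if i = j then 1 else 0) - c * (x i * y j) := by
    intro i j
    have h : ∑ k, (x i * y k) * (x k * y j) = c * (x i * y j) := by
      rw [hc, Finset.sum_mul]
      exact Finset.sum_congr rfl fun k _ => by ring
    simp [Matrix.sub_apply, Matrix.one_apply, Matrix.mul_apply, Matrix.vecMulVec_apply, h]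
  have expand : ∀ i j : Fin d, (((if i = j then (1:ℝ) else 0) - c * (x i * y j)) ^ 2)
      = (if i = j then (1:ℝ) - 2 * c * (x i * y i) else 0) + c ^ 2 * (x i ^ 2 * y j ^ 2) := by
    intro i j
    split_ifs with h
    · subst h; ring
    · ring
  have main : ∑ i, ∑ j, ((1 : Matrix (Fin d) (Fin d) ℝ) -
        Matrix.vecMulVec x y * Matrix.vecMulVec x y) i j ^ 2
      = (d : ℝ) - 2 * c ^ 2 + c ^ 2 * ((∑ i, x i ^ 2) * (∑ i, y i ^ 2)) := by
    have A : ∑ i : Fin d, ((1:ℝ) - 2 * c * (x i * y i)) = d - 2 * c * c := by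
      rw [Finset.sum_sub_distrib, ← Finset.mul_sum, ← hc]; simp
    have B : ∑ i : Fin d, ∑ j : Fin d, c ^ 2 * (x i ^ 2 * y j ^ 2)
        = c ^ 2 * ((∑ i, x i ^ 2) * (∑ j, y j ^ 2)) := by
      rw [Finset.sum_mul_sum, Finset.mul_sum]
      exact Finset.sum_congr rfl fun i _ => (Finset.mul_sum ..).symm
    simp only [key, expand, Finset.sum_add_distrib, Finset.sum_ite_eq, Finset.mem_univ,
      if_true, A, B]
    ring
  constructor
  · rw [main]; ring
  · rw [main]
    have h1 : c ^ 2 ≤ (∑ i, x i ^ 2) * (∑ i, y i ^ 2) := by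
      have := Finset.sum_mul_sq_le_sq_mul_sq Finset.univ x y
      simpa [hc] using this
    nlinarith [sq_nonneg (c ^ 2 - 1), sq_nonneg c, h1]
end

section
/- A pair of vectors (x, y) in R^d achieves the minimum value d - 1 of ‖I - x yᵀ x yᵀ‖_F² if and only if x = c·y for some real c and ‖x‖·‖y‖ = 1. -/
/-!
Write `s = x ⬝ᵥ y`. Since `(x yᵀ)² = s • x yᵀ`, expanding the Frobenius norm gives
`‖I - x yᵀ x yᵀ‖_F² = (d - 1) + (s² - 1)² + s² (‖x‖² ‖y‖² - s²)`,
where the last term is nonnegative by Cauchy–Schwarz. So the minimum `d - 1` is attained exactly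
when `s² = 1 = ‖x‖² ‖y‖²`, i.e. when Cauchy–Schwarz is an equality and `‖x‖ ‖y‖ = 1`.
-/

open Finset Matrix

variable {ι R : Type*} [Fintype ι]

lemma dotProduct_sq_le_dotProduct_self_mul [CommRing R] [LinearOrder R] [IsStrictOrderedRing R]
    (x y : ι → R) : (x ⬝ᵥ y) ^ 2 ≤ (x ⬝ᵥ x) * (y ⬝ᵥ y) := by
  simpa only [dotProduct, sq] using sum_mul_sq_le_sq_mul_sq univ x y

lemma dotProduct_self_smul_sub_smul [CommRing R] (x y : ι → R) :
    ((y ⬝ᵥ y) • x - (x ⬝ᵥ y) • y) ⬝ᵥ ((y ⬝ᵥ y) • x - (x ⬝ᵥ y) • y) =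
      (y ⬝ᵥ y) * ((x ⬝ᵥ x) * (y ⬝ᵥ y) - (x ⬝ᵥ y) ^ 2) := by
  simp only [dotProduct_sub, sub_dotProduct, dotProduct_smul, smul_dotProduct, smul_eq_mul,
    dotProduct_comm y x]
  ring

lemma exists_eq_smul_of_dotProduct_sq_eq [Field R] [LinearOrder R] [IsStrictOrderedRing R]
    {x y : ι → R} (hy : y ⬝ᵥ y ≠ 0) (h : (x ⬝ᵥ y) ^ 2 = (x ⬝ᵥ x) * (y ⬝ᵥ y)) :
    ∃ c : R, x = c • y := by
  have hzero : (y ⬝ᵥ y) • x - (x ⬝ᵥ y) • y = 0 := by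
    rw [← dotProduct_self_eq_zero, dotProduct_self_smul_sub_smul, h, sub_self, mul_zero]
  refine ⟨(x ⬝ᵥ y) / (y ⬝ᵥ y), ?_⟩
  rw [div_eq_inv_mul, mul_smul, ← sub_eq_zero.mp hzero, inv_smul_smul₀ hy]

lemma dotProduct_smul_self_sq [CommRing R] (c : R) (y : ι → R) :
    (c • y ⬝ᵥ y) ^ 2 = (c • y ⬝ᵥ c • y) * (y ⬝ᵥ y) := by
  simp only [smul_dotProduct, dotProduct_smul, smul_eq_mul]
  ring

lemma sum_sq_one_sub_smul_vecMulVec [CommRing R] [DecidableEq ι] (s : R) (x y : ι → R) :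
    ∑ i, ∑ j, (1 - s • vecMulVec x y) i j ^ 2 =
      Fintype.card ι - 2 * s * (x ⬝ᵥ y) + s ^ 2 * (x ⬝ᵥ x) * (y ⬝ᵥ y) := by
  have hentry : ∀ i j, (1 - s • vecMulVec x y) i j ^ 2 =
      (if i = j then 1 - 2 * s * (x i * y j) else 0) + s ^ 2 * (x i * x i) * (y j * y j) := by
    intro i j
    simp only [Matrix.sub_apply, one_apply, Matrix.smul_apply, vecMulVec_apply, smul_eq_mul]
    split_ifs <;> ring
  simp only [hentry, sum_add_distrib, sum_ite_eq, mem_univ, if_true, sum_sub_distrib,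
    sum_const, card_univ, nsmul_eq_mul, mul_one, ← mul_sum, ← sum_mul, dotProduct]

lemma sum_sq_one_sub_vecMulVec_mul_self [CommRing R] [DecidableEq ι] (x y : ι → R) :
    ∑ i, ∑ j, (1 - vecMulVec x y * vecMulVec x y) i j ^ 2 =
      (Fintype.card ι - 1) + ((x ⬝ᵥ y) ^ 2 - 1) ^ 2 +
        (x ⬝ᵥ y) ^ 2 * ((x ⬝ᵥ x) * (y ⬝ᵥ y) - (x ⬝ᵥ y) ^ 2) := by
  rw [vecMulVec_mul_vecMulVec, vecMulVec_smul, sum_sq_one_sub_smul_vecMulVec, dotProduct_comm y x]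
  ring

/-- `(x, y)` achieves the minimum value `d - 1` of `‖I - x yᵀ x yᵀ‖_F²` iff
`x = c • y` for some real `c` and `‖x‖ ‖y‖ = 1`. -/
theorem frobenius_min_iff (d : ℕ) (x y : Fin d → ℝ) :
    (∑ i, ∑ j, ((1 : Matrix (Fin d) (Fin d) ℝ) -
        Matrix.vecMulVec x y * Matrix.vecMulVec x y) i j ^ 2) = (d : ℝ) - 1
      ↔ (∃ c : ℝ, x = c • y) ∧
        Real.sqrt (∑ i, x i ^ 2) * Real.sqrt (∑ i, y i ^ 2) = 1 := by
  have hsq : ∀ v : Fin d → ℝ, ∑ i, v i ^ 2 = v ⬝ᵥ v := fun v => by simp only [dotProduct, sq]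
  have hnorm : √(x ⬝ᵥ x) * √(y ⬝ᵥ y) = 1 ↔ (x ⬝ᵥ x) * (y ⬝ᵥ y) = 1 := by
    have hx : 0 ≤ x ⬝ᵥ x := Fintype.sum_nonneg fun i => mul_self_nonneg (x i)
    rw [← Real.sqrt_mul hx, Real.sqrt_eq_one]
  have hCS := dotProduct_sq_le_dotProduct_self_mul x y
  rw [sum_sq_one_sub_vecMulVec_mul_self, Fintype.card_fin, hsq, hsq, hnorm, add_assoc,
    add_eq_left, add_eq_zero_iff_of_nonneg (sq_nonneg _)
      (mul_nonneg (sq_nonneg _) (sub_nonneg.mpr hCS)), sq_eq_zero_iff, sub_eq_zero]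
  constructor
  · rintro ⟨hs, hgap⟩
    rw [hs, one_mul, sub_eq_zero] at hgap
    exact ⟨exists_eq_smul_of_dotProduct_sq_eq (right_ne_zero_of_mul_eq_one hgap)
      (hs.trans hgap.symm), hgap⟩
  · rintro ⟨⟨c, rfl⟩, hXY⟩
    rw [dotProduct_smul_self_sq, hXY]
    norm_num
end

section
/- Let f(α,c) = (1 + (1+α)(1-c))·(1 + (1+α)(1 - c(1 + (1+α)(1-c))²)). For all α with -1/100 < α < 1/8 and all c with 1 < c < 13/10, the partial derivative ∂f/∂α(α,c) is strictly positive; in particular f(α,c) is strictly increasing in α on this range. -/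
/-- The two-step contraction factor. -/
noncomputable def f (α c : ℝ) : ℝ :=
  (1 + (1 + α) * (1 - c)) * (1 + (1 + α) * (1 - c * (1 + (1 + α) * (1 - c)) ^ 2))

/-!
The derivative of `f` in `α` factors as `(c - 1)` times
`-4 - 2α + c(1 + α)(15/16 + (2c(1 + α) - 17/4 - 2α)²)`, and the second factor is positive on
the given box, so `f(·, c)` has positive derivative on the whole interval `(-1/100, 1/8)`.
-/

lemma hasDerivAt_f (α c : ℝ) :
    HasDerivAt (fun a => f a c)
      ((c - 1) * (-4 - 2 * α + c * (1 + α) * (15 / 16 + (2 * c * (1 + α) - 17 / 4 - 2 * α) ^ 2)))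
      α := by
  have hs : HasDerivAt (fun a : ℝ => 1 + a) 1 α := (hasDerivAt_id α).const_add 1
  have hu : HasDerivAt (fun a : ℝ => 1 + (1 + a) * (1 - c)) (1 * (1 - c)) α :=
    (hs.mul_const (1 - c)).const_add 1
  have hv := (hs.fun_mul (((hu.fun_pow 2).const_mul c).const_sub 1)).const_add 1
  exact (hu.fun_mul hv).congr_deriv (by ring)

lemma deriv_f_factor_pos {α c : ℝ} (hα1 : -1/100 < α) (hα2 : α < 1/8)
    (hc1 : 1 < c) (hc2 : c < 13/10) :
    0 < -4 - 2 * α + c * (1 + α) * (15 / 16 + (2 * c * (1 + α) - 17 / 4 - 2 * α) ^ 2) := by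
  -- With `s = 1 + α` and `u = (c - 1)s ∈ (0, 3s/10)` the factor is the cubic
  -- `4s - 2 + 6u - 9su + 4su² - 9u² + 4u³`.
  have hs : 0 < 1 + α := by linarith
  have hu : 0 < (c - 1) * (1 + α) := mul_pos (by linarith) hs
  have hu' : 0 < (13/10 - c) * (1 + α) := mul_pos (by linarith) hs
  nlinarith [mul_pos hu hu', mul_pos hu hu, mul_pos (mul_pos hu hu) hs, mul_pos (mul_pos hu hu) hu]

lemma deriv_f_pos {α c : ℝ} (hα1 : -1/100 < α) (hα2 : α < 1/8)
    (hc1 : 1 < c) (hc2 : c < 13/10) :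
    0 < deriv (fun a => f a c) α := by
  rw [(hasDerivAt_f α c).deriv]
  exact mul_pos (by linarith) (deriv_f_factor_pos hα1 hα2 hc1 hc2)

/-- For `α ∈ (-1/100, 1/8)` and `c ∈ (1, 13/10)`, `∂f/∂α > 0`; in particular
`f(·, c)` is strictly increasing in `α` on this range. -/
theorem deriv_f_alpha_pos (α c : ℝ) (hα1 : -1/100 < α) (hα2 : α < 1/8)
    (hc1 : 1 < c) (hc2 : c < 13/10) :
    0 < deriv (fun a => f a c) α ∧
      StrictMonoOn (fun a => f a c) (Set.Ioo (-1/100 : ℝ) (1/8)) := by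
  refine ⟨deriv_f_pos hα1 hα2 hc1 hc2, strictMonoOn_of_deriv_pos (convex_Ioo _ _) ?_ ?_⟩
  · exact fun a _ => (hasDerivAt_f a c).continuousAt.continuousWithinAt
  · rw [interior_Ioo]
    exact fun a ha => deriv_f_pos ha.1 ha.2 hc1 hc2
end

section
/- Let β > 0 with β ≤ 1/(2·512²), and let c = 1 + t√β with √2 < t and t√β < 3/10. Then f(β, c) < 1 - β^{3/2} - 6β², where f(α,c) = (1 + (1+α)(1-c))·(1 + (1+α)(1 - c(1 + (1+α)(1-c))²)). -/
set_option maxHeartbeats 2000000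

lemma poly_ineq (s u : ℝ) (hs : 0 < s) (hs2 : s ^ 2 ≤ 1 / 524288)
    (hu : 0 < u) (hu3 : u < 3 / 10) (hsu : u ^ 2 > 2 * s ^ 2) :
    (1 + (1 + s ^ 2) * (1 - (1 + u))) *
      (1 + (1 + s ^ 2) * (1 - (1 + u) * (1 + (1 + s ^ 2) * (1 - (1 + u))) ^ 2))
      < 1 - s ^ 3 - 6 * (s ^ 2) ^ 2 := by
  have hus : s < u := by nlinarith
  have hs2u : s ^ 2 ≤ u ^ 2 / 2 := by linarith
  have hu1 : u ≤ 1 := by linarith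
  have hu3p : 0 < u ^ 3 := pow_pos hu 3
  have hu4p : (0:ℝ) ≤ u ^ 4 := (pow_pos hu 4).le
  have hu2b : u ^ 2 ≤ 9 / 100 := by nlinarith
  have hu3b : u ^ 3 ≤ 27 / 1000 := by nlinarith
  -- basic monomial comparisons
  have h1 : 2 * s ^ 2 * u ≤ u ^ 3 := by nlinarith
  have h2 : s ^ 3 ≤ s ^ 2 * u := by nlinarith
  have h2' : s ^ 2 * u ≤ u ^ 3 / 2 := by nlinarith
  have h4 : u ^ 4 ≤ (3/10) * u ^ 3 := by
    calc u ^ 4 = u * u ^ 3 := by ring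
      _ ≤ (3/10) * u ^ 3 := by
          exact mul_le_mul_of_nonneg_right hu3.le hu3p.le
  have h5 : 6 * s ^ 4 ≤ 3 * (s ^ 2 * u ^ 2) := by nlinarith
  have h6 : 4 * (s ^ 2 * u ^ 4) ≤ 2 * (s ^ 2 * u ^ 3) := by
    have : s ^ 2 * u ^ 4 = (s ^ 2 * u ^ 3) * u := by ring
    nlinarith [mul_le_mul_of_nonneg_left hu3.le (mul_nonneg (sq_nonneg s) hu3p.le)]
  -- powers of s vs u
  have hsu4 : s ^ 4 ≤ u ^ 4 / 4 := by nlinarith [sq_nonneg s, sq_nonneg u]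
  have hsu6 : s ^ 6 ≤ u ^ 6 / 8 := by
    have h := pow_le_pow_left₀ (sq_nonneg s) hs2u 3
    calc s ^ 6 = (s ^ 2) ^ 3 := by ring
      _ ≤ (u ^ 2 / 2) ^ 3 := h
      _ = u ^ 6 / 8 := by ring
  have hsu8 : s ^ 8 ≤ u ^ 8 / 16 := by
    have h := pow_le_pow_left₀ (sq_nonneg s) hs2u 4
    calc s ^ 8 = (s ^ 2) ^ 4 := by ring
      _ ≤ (u ^ 2 / 2) ^ 4 := h
      _ = u ^ 8 / 16 := by ring
  -- collapse high powers of u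
  have hc5 : u ^ 5 ≤ (9/100) * u ^ 3 := by
    calc u ^ 5 = u ^ 2 * u ^ 3 := by ring
      _ ≤ (9/100) * u ^ 3 := mul_le_mul_of_nonneg_right hu2b hu3p.le
  have hc6 : u ^ 6 ≤ (27/1000) * u ^ 3 := by
    calc u ^ 6 = u ^ 3 * u ^ 3 := by ring
      _ ≤ (27/1000) * u ^ 3 := mul_le_mul_of_nonneg_right hu3b hu3p.le
  have hle : ∀ n m : ℕ, n ≤ m → u ^ m ≤ u ^ n := fun n m h => pow_le_pow_of_le_one hu.le hu1 h
  have hd8 : u ^ 8 ≤ u ^ 6 := hle 6 8 (by norm_num)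
  have hd9 : u ^ 9 ≤ u ^ 6 := hle 6 9 (by norm_num)
  have hd10 : u ^ 10 ≤ u ^ 6 := hle 6 10 (by norm_num)
  have hd11 : u ^ 11 ≤ u ^ 6 := hle 6 11 (by norm_num)
  have hd12 : u ^ 12 ≤ u ^ 6 := hle 6 12 (by norm_num)
  -- tiny terms
  have t6 : 2 * (s ^ 4 * u) ≤ (1/2) * u ^ 5 := by
    have h := mul_le_mul_of_nonneg_right hsu4 hu.le
    calc 2 * (s ^ 4 * u) = 2 * (s ^ 4 * u) := rfl
      _ ≤ 2 * (u ^ 4 / 4 * u) := by linarith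
      _ = (1/2) * u ^ 5 := by ring
  have t1 : 6 * (s ^ 4 * u ^ 4) ≤ (3/2) * u ^ 6 := by
    have h := mul_le_mul_of_nonneg_right hsu4 hu4p
    calc 6 * (s ^ 4 * u ^ 4) ≤ 6 * (u ^ 4 / 4 * u ^ 4) := by linarith
      _ = (3/2) * u ^ 8 := by ring
      _ ≤ (3/2) * u ^ 6 := by linarith
  have t2 : s ^ 6 * u ^ 3 ≤ (1/8) * u ^ 6 := by
    have h := mul_le_mul_of_nonneg_right hsu6 hu3p.le
    calc s ^ 6 * u ^ 3 ≤ u ^ 6 / 8 * u ^ 3 := h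
      _ = (1/8) * u ^ 9 := by ring
      _ ≤ (1/8) * u ^ 6 := by linarith
  have t3 : 4 * (s ^ 6 * u ^ 4) ≤ (1/2) * u ^ 6 := by
    have h := mul_le_mul_of_nonneg_right hsu6 hu4p
    calc 4 * (s ^ 6 * u ^ 4) ≤ 4 * (u ^ 6 / 8 * u ^ 4) := by linarith
      _ = (1/2) * u ^ 10 := by ring
      _ ≤ (1/2) * u ^ 6 := by linarith
  have t4 : s ^ 8 * u ^ 3 ≤ (1/16) * u ^ 6 := by
    have h := mul_le_mul_of_nonneg_right hsu8 hu3p.le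
    calc s ^ 8 * u ^ 3 ≤ u ^ 8 / 16 * u ^ 3 := h
      _ = (1/16) * u ^ 11 := by ring
      _ ≤ (1/16) * u ^ 6 := by linarith
  have t5 : s ^ 8 * u ^ 4 ≤ (1/16) * u ^ 6 := by
    have h := mul_le_mul_of_nonneg_right hsu8 hu4p
    calc s ^ 8 * u ^ 4 ≤ u ^ 8 / 16 * u ^ 4 := h
      _ = (1/16) * u ^ 12 := by ring
      _ ≤ (1/16) * u ^ 6 := by linarith
  have hpos1 : 0 ≤ s ^ 4 * u ^ 2 := by positivity
  have hpos2 : 0 ≤ s ^ 4 * u ^ 3 := by positivity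
  have hpos3 : 0 ≤ s ^ 6 * u ^ 2 := by positivity
  have hpos4 : 0 ≤ s ^ 2 * u ^ 3 := by positivity
  have hpos5 : 0 ≤ s ^ 2 * u ^ 2 := by positivity
  have key : (1 - s ^ 3 - 6 * (s ^ 2) ^ 2) -
      (1 + (1 + s ^ 2) * (1 - (1 + u))) *
      (1 + (1 + s ^ 2) * (1 - (1 + u) * (1 + (1 + s ^ 2) * (1 - (1 + u))) ^ 2))
      = 2 * u ^ 3 - u ^ 4 - 2 * s ^ 2 * u + 3 * (s ^ 2 * u ^ 2) + 5 * (s ^ 2 * u ^ 3)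
        - 4 * (s ^ 2 * u ^ 4) - s ^ 3 - 6 * s ^ 4 - 2 * (s ^ 4 * u) + 6 * (s ^ 4 * u ^ 2)
        + 3 * (s ^ 4 * u ^ 3) - 6 * (s ^ 4 * u ^ 4) + 3 * (s ^ 6 * u ^ 2) - s ^ 6 * u ^ 3
        - 4 * (s ^ 6 * u ^ 4) - s ^ 8 * u ^ 3 - s ^ 8 * u ^ 4 := by ring
  linarith [key]

/-- For `β ≤ 1/(2·512²)` and `c = 1 + t√β` with `√2 < t` and `t√β < 3/10`,
the two-step factor satisfies `f(β, c) < 1 - β^{3/2} - 6β²`. -/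
theorem two_step_decrease (β t c : ℝ) (hβ : 0 < β) (hβ2 : β ≤ 1 / (2 * 512 ^ 2))
    (ht : Real.sqrt 2 < t) (ht2 : t * Real.sqrt β < 3/10)
    (hc : c = 1 + t * Real.sqrt β) :
    f β c < 1 - Real.sqrt β ^ 3 - 6 * β ^ 2 := by
  set s := Real.sqrt β with hsdef
  have hs : 0 < s := Real.sqrt_pos.mpr hβ
  have hs2' : s ^ 2 = β := Real.sq_sqrt hβ.le
  have hs2 : s ^ 2 ≤ 1 / 524288 := by rw [hs2']; linarith [hβ2]
  have ht0 : 0 < t := lt_of_le_of_lt (Real.sqrt_nonneg 2) ht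
  have hu : 0 < t * s := mul_pos ht0 hs
  have ht2' : 2 < t ^ 2 := by
    nlinarith [Real.sq_sqrt (by norm_num : (0:ℝ) ≤ 2), Real.sqrt_nonneg 2]
  have hsu : (t * s) ^ 2 > 2 * s ^ 2 := by nlinarith [sq_nonneg s]
  have key := poly_ineq s (t * s) hs hs2 hu ht2 hsu
  rw [f, hc, ← hs2']
  exact key
end

section
/- The map g(c) = c·(1 + (1+α)(1-c))² is monotonically decreasing in c on the interval (1 - K^{-1}, 1 + K^{-1} - K^{-2}) for any fixed α with -1/100 < α < K^{-2}/2, provided K > 512. -/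
lemma one_step_aux (α u q : ℝ) (h1 : -1/100 < α) (h2 : α < 1/100)
    (hu1 : -(1/256) ≤ u) (hu2 : u ≤ 1/256) (hq1 : 0 ≤ q) (hq2 : q ≤ 3/512^2) :
    -1 - u + q + 2*α*(q-1) + α^2*(u+q) < 0 := by
  nlinarith [mul_nonneg (show (0:ℝ) ≤ α + 1/100 by linarith)
      (show (0:ℝ) ≤ 1 - q by nlinarith),
    mul_nonneg (show (0:ℝ) ≤ (1/100)^2 - α^2 by nlinarith)
      (show (0:ℝ) ≤ 1/256 + 3/512^2 - (u + q) by linarith)]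

/-- The one-step map `c ↦ c (1 + (1+α)(1-c))²` is monotonically decreasing on
`(1 - K⁻¹, 1 + K⁻¹ - K⁻²)` for `-1/100 < α < K⁻²/2` and `K > 512`. -/
theorem one_step_map_anti (K α : ℝ) (hK : 512 < K)
    (hα1 : -1/100 < α) (hα2 : α < (1 / K ^ 2) / 2) :
    StrictAntiOn (fun c : ℝ => c * (1 + (1 + α) * (1 - c)) ^ 2)
      (Set.Ioo (1 - 1 / K) (1 + 1 / K - 1 / K ^ 2)) := by
  have hK0 : (0:ℝ) < K := by linarith
  have hK1 : 1 / K < 1 / 512 := by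
    apply one_div_lt_one_div_of_lt <;> linarith
  have hK2 : 1 / K ^ 2 < 1 / 512 ^ 2 := by
    apply one_div_lt_one_div_of_lt
    · positivity
    · nlinarith
  have hK2pos : (0:ℝ) < 1 / K ^ 2 := by positivity
  intro a ha b hb hab
  simp only [Set.mem_Ioo] at ha hb
  have ha1 : 1 - 1/512 < a := by linarith [ha.1]
  have ha2 : a < 1 + 1/512 := by linarith [ha.2]
  have hb1 : 1 - 1/512 < b := by linarith [hb.1]
  have hb2 : b < 1 + 1/512 := by linarith [hb.2]
  have hα2' : α < 1/100 := by nlinarith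
  have hq1 : 0 ≤ (a-1)^2+(a-1)*(b-1)+(b-1)^2 := by
    nlinarith [sq_nonneg (a-b), sq_nonneg (a+b-2)]
  have hq2 : (a-1)^2+(a-1)*(b-1)+(b-1)^2 ≤ 3/512^2 := by
    nlinarith [sq_nonneg (a-b)]
  have haux := one_step_aux α (a+b-2) ((a-1)^2+(a-1)*(b-1)+(b-1)^2)
    hα1 hα2' (by linarith) (by linarith) hq1 hq2
  have key : (1+α)^2*(a^2+a*b+b^2) - 2*(1+α)*(2+α)*(a+b) + (2+α)^2 < 0 := by
    have hring : (1+α)^2*(a^2+a*b+b^2) - 2*(1+α)*(2+α)*(a+b) + (2+α)^2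
        = -1 - (a+b-2) + ((a-1)^2+(a-1)*(b-1)+(b-1)^2)
          + 2*α*(((a-1)^2+(a-1)*(b-1)+(b-1)^2)-1)
          + α^2*((a+b-2)+((a-1)^2+(a-1)*(b-1)+(b-1)^2)) := by ring
    linarith [hring, haux]
  have h := mul_neg_of_pos_of_neg (sub_pos.mpr hab) key
  have hid : b * (1 + (1 + α) * (1 - b)) ^ 2 - a * (1 + (1 + α) * (1 - a)) ^ 2
      = (b - a) * ((1+α)^2*(a^2+a*b+b^2) - 2*(1+α)*(2+α)*(a+b) + (2+α)^2) := by
    ring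
  simp only
  linarith [hid, h]
end

section
/- Let K > 512 and η < K^{-4}/8000000. If c ∈ (1 - K^{-1}, 1 + K^{-1} - K^{-2}) and -1/100 < α < K^{-2}/2, then c·(1 + (1+α)(1-c))² + 100η² < 1 + K^{-1} - K^{-2} and c·(1 + (1+α)(1-c))² - 100η² > 1 - K^{-1}. -/
private lemma bracket1_pos (k α c : ℝ) (hk : 0 < k) (hk2 : k < 1/512)
    (hc1 : 1 - k < c) (hc2 : c < 1 + k - k^2)
    (hα1 : -1/100 < α) (hα2 : α < k^2/2) :
    0 < (1+2*α) + (α^2-1)*(k+(1-c)) - (1+α)^2*(k^2+k*(1-c)+(1-c)^2) := by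
  have hα3 : α < 1/10000 := by nlinarith
  have hαsq : α^2 < 1/10000 := by nlinarith
  have hS0 : 0 ≤ k^2+k*(1-c)+(1-c)^2 := by nlinarith [sq_nonneg (k/2 + (1-c)), sq_nonneg k]
  have hS3 : k^2+k*(1-c)+(1-c)^2 ≤ 3*k^2 := by
    nlinarith [sq_nonneg (k-(1-c)), mul_nonneg (show (0:ℝ) ≤ k-(1-c) by linarith) (show (0:ℝ) ≤ k+(1-c) by nlinarith)]
  nlinarith [mul_nonneg (sq_nonneg α) (show (0:ℝ) ≤ k+(1-c) by nlinarith),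
    mul_nonneg (show (0:ℝ) ≤ 1/10000 - α by linarith) hS0,
    mul_nonneg (show (0:ℝ) ≤ 1/10000 - α^2 by linarith) hS0,
    mul_nonneg (show (0:ℝ) ≤ α + 1/100 by linarith) hS0]

private lemma bracket2_pos (k α c : ℝ) (hk : 0 < k) (hk2 : k < 1/512)
    (hc1 : 1 - k < c) (hc2 : c < 1 + k - k^2)
    (hα1 : -1/100 < α) (hα2 : α < k^2/2) :
    0 < (1+2*α) + (α^2-1)*((1-c)+(k^2-k)) - (1+α)^2*((1-c)^2+(1-c)*(k^2-k)+(k^2-k)^2) := by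
  have hα3 : α < 1/10000 := by nlinarith
  have hαsq : α^2 < 1/10000 := by nlinarith
  have hS0 : 0 ≤ (1-c)^2+(1-c)*(k^2-k)+(k^2-k)^2 := by
    nlinarith [sq_nonneg ((1-c) + (k^2-k)/2), sq_nonneg (k^2-k)]
  have hS3 : (1-c)^2+(1-c)*(k^2-k)+(k^2-k)^2 ≤ 3*k^2 := by
    nlinarith [mul_nonneg (show (0:ℝ) ≤ k-(1-c) by linarith) (show (0:ℝ) ≤ k+(1-c) by nlinarith),
      mul_nonneg (show (0:ℝ) ≤ (1-c)-(k^2-k) by linarith) (show (0:ℝ) ≤ k+(k^2-k) by nlinarith),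
      sq_nonneg ((1-c)-(k^2-k)), mul_pos hk hk]
  nlinarith [mul_nonneg (sq_nonneg α) (show (0:ℝ) ≤ (1-c)+(k^2-k)+2*k by nlinarith),
    mul_nonneg (show (0:ℝ) ≤ 1/10000 - α^2 by linarith) hk.le,
    mul_nonneg (show (0:ℝ) ≤ 1/10000 - α by linarith) hS0,
    mul_nonneg (show (0:ℝ) ≤ 1/10000 - α^2 by linarith) hS0,
    mul_nonneg (show (0:ℝ) ≤ α + 1/100 by linarith) hS0]

private lemma endpoint_upper (k α : ℝ) (hk : 0 < k) (hk2 : k < 1/512)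
    (hα1 : -1/100 < α) (hα2 : α < k^2/2) :
    (1-k)*(1+(1+α)*k)^2 + k^5/1000 ≤ 1 + k - k^2 := by
  rcases le_or_gt α 0 with h0 | h0
  · nlinarith [mul_nonneg (mul_nonneg (neg_nonneg.2 h0) hk.le)
      (show (0:ℝ) ≤ α*k*(1-k)+2*(1-k^2) by nlinarith [mul_nonneg (neg_nonneg.2 h0) hk.le]),
      mul_pos hk hk, mul_pos (mul_pos hk hk) hk, mul_pos (mul_pos (mul_pos hk hk) hk) hk]
  · have hα4 : α^2 < k^4/4 := by nlinarith
    nlinarith [mul_nonneg (show (0:ℝ) ≤ k^2/2 - α by linarith)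
        (mul_nonneg hk.le (show (0:ℝ) ≤ 1-k^2 by nlinarith)),
      mul_nonneg (show (0:ℝ) ≤ k^4/4 - α^2 by linarith)
        (mul_nonneg (mul_nonneg hk.le hk.le) (show (0:ℝ) ≤ 1-k by linarith)),
      mul_pos (mul_pos (mul_pos (mul_pos hk hk) hk) hk) hk]

private lemma endpoint_lower (k α : ℝ) (hk : 0 < k) (hk2 : k < 1/512)
    (hα1 : -1/100 < α) (hα2 : α < k^2/2) :
    1 - k + k^5/1000 ≤ (1+k-k^2)*(1+(1+α)*(k^2-k))^2 := by
  nlinarith [mul_pos (show (0:ℝ) < k^2/2 - α by linarith) (show (0:ℝ) < k - k^2 by nlinarith),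
    sq_nonneg (α*(k-k^2)),
    mul_nonneg (mul_nonneg (sq_nonneg (1+α)) (show (0:ℝ) ≤ k-k^2 by nlinarith)) (sq_nonneg (k-k^2)),
    mul_pos hk hk]

set_option maxHeartbeats 1000000 in
/-- Invariance of `(1 - K⁻¹, 1 + K⁻¹ - K⁻²)` under the perturbed one-step
update of the squared inner product. -/
theorem interval_invariance (K η α c : ℝ) (hK : 512 < K)
    (hη : 0 < η) (hη2 : η < (1 / K ^ 4) / 8000000)
    (hc1 : 1 - 1 / K < c) (hc2 : c < 1 + 1 / K - 1 / K ^ 2)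
    (hα1 : -1/100 < α) (hα2 : α < (1 / K ^ 2) / 2) :
    c * (1 + (1 + α) * (1 - c)) ^ 2 + 100 * η ^ 2 < 1 + 1 / K - 1 / K ^ 2 ∧
    1 - 1 / K < c * (1 + (1 + α) * (1 - c)) ^ 2 - 100 * η ^ 2 := by
  have hK0 : (0:ℝ) < K := by linarith
  set k : ℝ := 1/K with hkdef
  have hk : 0 < k := by positivity
  have hk2 : k < 1/512 := by
    rw [hkdef, div_lt_div_iff₀ hK0 (by norm_num)]; linarith
  have hK2 : 1/K^2 = k^2 := by rw [hkdef]; ring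
  have hK4 : 1/K^4 = k^4 := by rw [hkdef]; ring
  rw [hK2] at hc2 hα2 ⊢
  rw [hK4] at hη2
  have hk1 : k < 1 := by linarith
  have hk5 : (0:ℝ) < k^5 := by positivity
  -- control the noise term
  have he2 : 100 * η^2 < k^5/1000 := by
    have h1 : η^2 < (k^4/8000000)^2 := by nlinarith
    have h3 : k^3 ≤ 1 := by nlinarith
    have h2 : k^8 ≤ k^5 := by
      calc k^8 = k^5 * k^3 := by ring
        _ ≤ k^5 * 1 := by nlinarith
        _ = k^5 := by ring
    nlinarith [h1, h2]
  have hB1 := bracket1_pos k α c hk hk2 hc1 hc2 hα1 hα2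
  have hB2 := bracket2_pos k α c hk hk2 hc1 hc2 hα1 hα2
  have hmono1 : c * (1 + (1 + α) * (1 - c)) ^ 2 < (1-k)*(1+(1+α)*k)^2 := by
    have key : (1-k)*(1+(1+α)*k)^2 - c*(1+(1+α)*(1-c))^2
        = (c-(1-k)) * ((1+2*α) + (α^2-1)*(k+(1-c)) - (1+α)^2*(k^2+k*(1-c)+(1-c)^2)) := by
      ring
    linarith [mul_pos (show (0:ℝ) < c - (1-k) by linarith) hB1]
  have hmono2 : (1+k-k^2)*(1+(1+α)*(k^2-k))^2 < c * (1 + (1 + α) * (1 - c)) ^ 2 := by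
    have key : c*(1+(1+α)*(1-c))^2 - (1+k-k^2)*(1+(1+α)*(k^2-k))^2
        = ((1+k-k^2)-c) * ((1+2*α) + (α^2-1)*((1-c)+(k^2-k)) - (1+α)^2*((1-c)^2+(1-c)*(k^2-k)+(k^2-k)^2)) := by
      ring
    linarith [mul_pos (show (0:ℝ) < (1+k-k^2) - c by linarith) hB2]
  have hu := endpoint_upper k α hk hk2 hα1 hα2
  have hl := endpoint_lower k α hk hk2 hα1 hα2
  constructor
  · linarith
  · linarith
end

section
/- Let b_{t+1} = -b_t - 4a_t b_t κ - 3b_t² - b_t³ + E_t where |E_t| ≤ K(|a_t b_t² κ| + |a_t² b_t κ²| + |b_t² κ⁴| + |b_t κ⁵|). If |b_t| < K^{-1}, |a_t| < κ·K^{-2} (so |a_t κ| ≤ K^{-2}), κ < K^{-2}, and K > 512, then (b_{t+1}/b_t)⁴ ≥ (1 - 10K^{-1})⁴ > 0.7. -/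
set_option maxHeartbeats 1000000 in
private theorem b_ratio_core (K κ A B : ℝ) (hK : 512 < K) (hA : A * K^4 < 1) (hB : B * K < 1)
    (hk : κ * K^2 < 1) (hA0 : 0 ≤ A) (hB0 : 0 < B) (hk0 : 0 < κ) :
    (4*A*B*κ + 3*B^2 + B^3 + K*(A*B^2*κ + A^2*B*κ^2 + B^2*κ^4 + B*κ^5)) * K ≤ 10 * B := by
  have hK0 : (0:ℝ) < K := by linarith
  have hK1 : (1:ℝ) < K := by linarith
  have hK5 : (4:ℝ) ≤ K^5 := by nlinarith [pow_le_pow_left₀ (by norm_num : (0:ℝ) ≤ 512) hK.le 5, (by norm_num : (4:ℝ) ≤ (512:ℝ)^5)]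
  have hAk : A * κ * (K^4 * K^2) < 1 :=
    by nlinarith [mul_lt_mul'' hA hk (by positivity) (by positivity)]
  have hB1 : B < 1 := by nlinarith
  have hk1 : κ < 1 := by nlinarith [sq_nonneg K]
  have hx6 : κ^4*K^2 < 1 := by
    nlinarith [mul_lt_mul'' hk (pow_lt_one₀ hk0.le hk1 (by norm_num : 3 ≠ 0)) (by positivity) (by positivity)]
  have hx7 : κ^5*K^2 < 1 := by
    nlinarith [mul_lt_mul'' hk (pow_lt_one₀ hk0.le hk1 (by norm_num : 4 ≠ 0)) (by positivity) (by positivity)]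
  have hA1 : A < 1 := by nlinarith [pow_pos hK0 4, one_lt_pow₀ hK1 (by norm_num : 4 ≠ 0)]
  have hAkK2 : A * κ * K^2 < 1 := by nlinarith [mul_nonneg (mul_nonneg hA0 hk0.le) (by positivity : (0:ℝ) ≤ K^2), sq_nonneg (K^2), pow_pos hK0 2, pow_pos hK0 4]
  have t1 : 4*A*B*κ*K ≤ B := by
    nlinarith [mul_le_mul_of_nonneg_left hAk.le hB0.le, mul_nonneg (mul_nonneg hA0 hk0.le) hB0.le, mul_pos hB0 hK0]
  have t2 : 3*B^2*K ≤ 3*B := by nlinarith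
  have t3 : B^3*K ≤ B := by nlinarith [sq_nonneg B, mul_pos hB0 hB0]
  have t4 : K^2*(A*B^2*κ) ≤ B := by
    nlinarith [mul_le_mul_of_nonneg_left hAkK2.le hB0.le, mul_nonneg (mul_nonneg hA0 hk0.le) hB0.le]
  have t5 : K^2*(A^2*B*κ^2) ≤ B := by
    nlinarith [mul_le_mul_of_nonneg_left hAkK2.le (mul_nonneg hA0 hk0.le), mul_nonneg (mul_nonneg hA0 hk0.le) hB0.le, mul_nonneg hA0 hk0.le]
  have hB2 : B^2 ≤ B := by nlinarith
  have t6 : K^2*(B^2*κ^4) ≤ B :=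
    calc K^2*(B^2*κ^4) = (κ^4*K^2)*B^2 := by ring
      _ ≤ 1*B^2 := mul_le_mul_of_nonneg_right hx6.le (by positivity)
      _ = B^2 := one_mul _
      _ ≤ B := hB2
  have t7 : K^2*(B*κ^5) ≤ B :=
    calc K^2*(B*κ^5) = (κ^5*K^2)*B := by ring
      _ ≤ 1*B := mul_le_mul_of_nonneg_right hx7.le hB0.le
      _ = B := one_mul _
  calc (4*A*B*κ + 3*B^2 + B^3 + K*(A*B^2*κ + A^2*B*κ^2 + B^2*κ^4 + B*κ^5)) * K
      = 4*A*B*κ*K + 3*B^2*K + B^3*K + K^2*(A*B^2*κ) + K^2*(A^2*B*κ^2)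
        + K^2*(B^2*κ^4) + K^2*(B*κ^5) := by ring
    _ ≤ 10 * B := by linarith

/-- The multiplicative update of `b` satisfies `(b'/b)⁴ ≥ (1 - 10K⁻¹)⁴ > 0.7`. -/
theorem b_ratio_bound (K κ a b b' E : ℝ) (hK : 512 < K)
    (hb' : b' = -b - 4 * a * b * κ - 3 * b ^ 2 - b ^ 3 + E)
    (hE : |E| ≤ K * (|a * b ^ 2 * κ| + |a ^ 2 * b * κ ^ 2| +
      |b ^ 2 * κ ^ 4| + |b * κ ^ 5|))
    (hb : |b| < 1 / K) (hb0 : b ≠ 0) (ha : |a| < κ * (1 / K ^ 2))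
    (hκ : 0 < κ) (hκ2 : κ < 1 / K ^ 2) :
    (b' / b) ^ 4 ≥ (1 - 10 * (1 / K)) ^ 4 ∧ (1 - 10 * (1 / K)) ^ 4 > 0.7 := by
  have hK0 : (0:ℝ) < K := by linarith
  have hB0 : 0 < |b| := abs_pos.mpr hb0
  -- hypotheses in multiplicative form
  have hbK : |b| * K < 1 := (lt_div_iff₀ hK0).mp hb
  have hκK : κ * K ^ 2 < 1 := (lt_div_iff₀ (by positivity)).mp hκ2
  have hA4 : |a| < 1 / K ^ 4 := by
    calc |a| < κ * (1 / K ^ 2) := ha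
      _ < (1 / K ^ 2) * (1 / K ^ 2) := by
          exact mul_lt_mul_of_pos_right hκ2 (by positivity)
      _ = 1 / K ^ 4 := by ring
  have haK : |a| * K ^ 4 < 1 := (lt_div_iff₀ (by positivity)).mp hA4
  -- rewrite absolute values
  have e1 : |4 * a * b * κ| = 4 * |a| * |b| * κ := by
    rw [abs_mul, abs_mul, abs_mul, abs_of_pos hκ]; norm_num
  have e2 : |3 * b ^ 2| = 3 * |b| ^ 2 := by
    rw [abs_mul, sq_abs b]; norm_num
  have e3 : |b ^ 3| = |b| ^ 3 := abs_pow b 3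
  have e4 : |a * b ^ 2 * κ| = |a| * |b| ^ 2 * κ := by
    rw [abs_mul, abs_mul, abs_of_pos hκ, abs_pow]
  have e5 : |a ^ 2 * b * κ ^ 2| = |a| ^ 2 * |b| * κ ^ 2 := by
    rw [abs_mul, abs_mul, abs_pow, abs_of_nonneg (sq_nonneg κ)]
  have e6 : |b ^ 2 * κ ^ 4| = |b| ^ 2 * κ ^ 4 := by
    rw [abs_mul, abs_pow, abs_of_nonneg (by positivity : (0:ℝ) ≤ κ ^ 4)]
  have e7 : |b * κ ^ 5| = |b| * κ ^ 5 := by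
    rw [abs_mul, abs_of_nonneg (by positivity : (0:ℝ) ≤ κ ^ 5)]
  -- key bound : |b' + b| ≤ 10 / K * |b|
  have hS := b_ratio_core K κ |a| |b| hK haK hbK hκK (abs_nonneg a) hB0 hκ
  have key : |b' + b| ≤ 10 / K * |b| := by
    have h1 : b' + b = -(4 * a * b * κ) + -(3 * b ^ 2) + -(b ^ 3) + E := by
      rw [hb']; ring
    have h4 : ∀ w x y z : ℝ, |w + x + y + z| ≤ |w| + |x| + |y| + |z| := by
      intro w x y z
      calc |w + x + y + z| ≤ |w + x + y| + |z| := abs_add_le _ _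
        _ ≤ |w + x| + |y| + |z| := by gcongr; exact abs_add_le _ _
        _ ≤ |w| + |x| + |y| + |z| := by gcongr; exact abs_add_le _ _
    have h2 : |b' + b| ≤ |4 * a * b * κ| + |3 * b ^ 2| + |b ^ 3| + |E| := by
      rw [h1]
      refine le_trans (h4 (-(4 * a * b * κ)) (-(3 * b ^ 2)) (-(b ^ 3))  E) ?_
      rw [abs_neg, abs_neg, abs_neg]
    rw [e1, e2, e3] at h2
    rw [e4, e5, e6, e7] at hE
    have h3 : |b' + b| ≤ (4 * |a| * |b| * κ + 3 * |b| ^ 2 + |b| ^ 3 +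
        K * (|a| * |b| ^ 2 * κ + |a| ^ 2 * |b| * κ ^ 2 + |b| ^ 2 * κ ^ 4 + |b| * κ ^ 5)) := by linarith
    have h5 : (4 * |a| * |b| * κ + 3 * |b| ^ 2 + |b| ^ 3 +
        K * (|a| * |b| ^ 2 * κ + |a| ^ 2 * |b| * κ ^ 2 + |b| ^ 2 * κ ^ 4 + |b| * κ ^ 5)) ≤ 10 / K * |b| := by
      rw [div_mul_eq_mul_div, le_div_iff₀ hK0]
      linarith [hS]
    linarith
  -- lower bound on |b'|
  have habs : |b| ≤ |b' + b| + |b'| := by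
    have h := abs_add_le (b' + b) (-b')
    rw [abs_neg] at h
    have heq : (b' + b) + -b' = b := by ring
    rwa [heq] at h
  have hlow : (1 - 10 * (1 / K)) * |b| ≤ |b'| := by
    have : 10 / K * |b| = 10 * (1 / K) * |b| := by ring
    nlinarith [key, habs]
  have hKinv : (1:ℝ) / K < 1 / 512 := by
    apply one_div_lt_one_div_of_lt <;> norm_num <;> linarith
  have h10 : (0:ℝ) ≤ 1 - 10 * (1 / K) := by
    have : (10:ℝ) * (1/K) < 10 * (1/512) := by linarith
    linarith [this]
  have hratio : 1 - 10 * (1 / K) ≤ |b' / b| := by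
    rw [abs_div, le_div_iff₀ hB0]
    exact hlow
  constructor
  · have h6 : (1 - 10 * (1 / K)) ^ 4 ≤ |b' / b| ^ 4 :=
      pow_le_pow_left₀ h10 hratio 4
    have h7 : |b' / b| ^ 4 = (b' / b) ^ 4 := by
      rw [← abs_pow, abs_of_nonneg (by positivity : (0:ℝ) ≤ (b'/b)^4)]
    linarith [h6, h7.le, h7.ge]
  · have h8 : (251/256 : ℝ) ≤ 1 - 10 * (1 / K) := by
      have : (10:ℝ) * (1/K) ≤ 10 * (1/512) := by linarith
      norm_num at this ⊢
      linarith
    calc (0.7:ℝ) < (251/256 : ℝ) ^ 4 := by norm_num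
      _ ≤ (1 - 10 * (1 / K)) ^ 4 := pow_le_pow_left₀ (by norm_num) h8 4
end

section
/- Let γ = K^{-2}/100 with K > 512, and c = 1 + q√γ with 1/2 < q ≤ 2/3. Then f(γ, c) ≥ f(γ, 1 + (2/3)√γ) > 1 + (10/27)γ^{3/2}, where f(α,c) = (1+(1+α)(1-c))(1+(1+α)(1-c(1+(1+α)(1-c))²)). -/
set_option maxHeartbeats 1000000

lemma mono_le_one' (q s : ℝ) (hq0 : 0 ≤ q) (hq1 : q ≤ 1) (hs0 : 0 ≤ s) (hs1 : s ≤ 1)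
    (i k : ℕ) : q^i * s^k ≤ 1 := by
  have h1 : q^i ≤ 1 := pow_le_one₀ hq0 hq1
  have h2 : s^k ≤ 1 := pow_le_one₀ hs0 hs1
  have h3 : (0:ℝ) ≤ s^k := pow_nonneg hs0 k
  have h4 : (0:ℝ) ≤ q^i := pow_nonneg hq0 i
  nlinarith

lemma P_nonneg (q s : ℝ) (hq1 : 1/2 < q) (hq2 : q ≤ 2/3) (h0 : 0 < s) (h1 : s < 1/5120) :
    0 ≤ (-10/9)*s^3 + (46/27)*s^4 + (2/9)*s^5 + (76/27)*s^6 + (4/3)*s^7 + (2/9)*s^8 + (-4/9)*s^9 + (-32/27)*s^10 + (-4/9)*s^11 + (-8/27)*s^12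
      + (4/3)*q*s^3 + (23/9)*q*s^4 + (10/3)*q*s^5 + (38/9)*q*s^6 + (2)*q*s^7 + (1/3)*q*s^8 + (-2/3)*q*s^9 + (-16/9)*q*s^10 + (-2/3)*q*s^11 + (-4/9)*q*s^12
      + (2)*q^2*s^3 + (-2/3)*q^2*s^4 + (5)*q^2*s^5 + (-8/3)*q^2*s^6 + (3)*q^2*s^7 + (-4)*q^2*s^8 + (-1)*q^2*s^9 + (-8/3)*q^2*s^10 + (-1)*q^2*s^11 + (-2/3)*q^2*s^12
      + (-1)*q^3*s^4 + (-4)*q^3*s^6 + (-6)*q^3*s^8 + (-4)*q^3*s^10 + (-1)*q^3*s^12 := by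
  have hq0 : 0 ≤ q := by linarith
  have hqle : q ≤ 1 := by linarith
  have hsle : s ≤ 1 := by linarith
  have hA : (1:ℝ)/18 ≤ 2*q^2 + (4/3)*q - 10/9 := by nlinarith
  have hR : (-36:ℝ) ≤ (46/27) + (2/9)*s + (76/27)*s^2 + (4/3)*s^3 + (2/9)*s^4 + (-4/9)*s^5 + (-32/27)*s^6 + (-4/9)*s^7 + (-8/27)*s^8 + (23/9)*q + (10/3)*q*s + (38/9)*q*s^2 + (2)*q*s^3 + (1/3)*q*s^4 + (-2/3)*q*s^5 + (-16/9)*q*s^6 + (-2/3)*q*s^7 + (-4/9)*q*s^8 + (-2/3)*q^2 + (5)*q^2*s + (-8/3)*q^2*s^2 + (3)*q^2*s^3 + (-4)*q^2*s^4 + (-1)*q^2*s^5 + (-8/3)*q^2*s^6 + (-1)*q^2*s^7 + (-2/3)*q^2*s^8 + (-1)*q^3 + (-4)*q^3*s^2 + (-6)*q^3*s^4 + (-4)*q^3*s^6 + (-1)*q^3*s^8 := by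
    have n1 : q^1*s^5 ≤ 1 := mono_le_one' q s hq0 hqle h0.le hsle 1 5
    have n2 : q^1*s^6 ≤ 1 := mono_le_one' q s hq0 hqle h0.le hsle 1 6
    have n3 : q^1*s^7 ≤ 1 := mono_le_one' q s hq0 hqle h0.le hsle 1 7
    have n4 : q^1*s^8 ≤ 1 := mono_le_one' q s hq0 hqle h0.le hsle 1 8
    have n5 : q^2*s^0 ≤ 1 := mono_le_one' q s hq0 hqle h0.le hsle 2 0
    have n6 : q^2*s^2 ≤ 1 := mono_le_one' q s hq0 hqle h0.le hsle 2 2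
    have n7 : q^2*s^4 ≤ 1 := mono_le_one' q s hq0 hqle h0.le hsle 2 4
    have n8 : q^2*s^5 ≤ 1 := mono_le_one' q s hq0 hqle h0.le hsle 2 5
    have n9 : q^2*s^6 ≤ 1 := mono_le_one' q s hq0 hqle h0.le hsle 2 6
    have n10 : q^2*s^7 ≤ 1 := mono_le_one' q s hq0 hqle h0.le hsle 2 7
    have n11 : q^2*s^8 ≤ 1 := mono_le_one' q s hq0 hqle h0.le hsle 2 8
    have n12 : q^3*s^0 ≤ 1 := mono_le_one' q s hq0 hqle h0.le hsle 3 0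
    have n13 : q^3*s^2 ≤ 1 := mono_le_one' q s hq0 hqle h0.le hsle 3 2
    have n14 : q^3*s^4 ≤ 1 := mono_le_one' q s hq0 hqle h0.le hsle 3 4
    have n15 : q^3*s^6 ≤ 1 := mono_le_one' q s hq0 hqle h0.le hsle 3 6
    have n16 : q^3*s^8 ≤ 1 := mono_le_one' q s hq0 hqle h0.le hsle 3 8
    have s5 : s^5 ≤ 1 := pow_le_one₀ h0.le hsle
    have s6 : s^6 ≤ 1 := pow_le_one₀ h0.le hsle
    have s7 : s^7 ≤ 1 := pow_le_one₀ h0.le hsle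
    have s8 : s^8 ≤ 1 := pow_le_one₀ h0.le hsle
    have p1 : 0 ≤ s := h0.le
    have p2 : (0:ℝ) ≤ q*s := by positivity
    have p3 : (0:ℝ) ≤ q*s^2 := by positivity
    have p4 : (0:ℝ) ≤ q*s^3 := by positivity
    have p5 : (0:ℝ) ≤ q*s^4 := by positivity
    have p6 : (0:ℝ) ≤ q^2*s := by positivity
    have p7 : (0:ℝ) ≤ q^2*s^3 := by positivity
    have p8 : (0:ℝ) ≤ s^2 := by positivity
    have p9 : (0:ℝ) ≤ s^3 := by positivity
    have p10 : (0:ℝ) ≤ s^4 := by positivity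
    linarith
  have hid : (-10/9)*s^3 + (46/27)*s^4 + (2/9)*s^5 + (76/27)*s^6 + (4/3)*s^7 + (2/9)*s^8 + (-4/9)*s^9 + (-32/27)*s^10 + (-4/9)*s^11 + (-8/27)*s^12
      + (4/3)*q*s^3 + (23/9)*q*s^4 + (10/3)*q*s^5 + (38/9)*q*s^6 + (2)*q*s^7 + (1/3)*q*s^8 + (-2/3)*q*s^9 + (-16/9)*q*s^10 + (-2/3)*q*s^11 + (-4/9)*q*s^12
      + (2)*q^2*s^3 + (-2/3)*q^2*s^4 + (5)*q^2*s^5 + (-8/3)*q^2*s^6 + (3)*q^2*s^7 + (-4)*q^2*s^8 + (-1)*q^2*s^9 + (-8/3)*q^2*s^10 + (-1)*q^2*s^11 + (-2/3)*q^2*s^12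
      + (-1)*q^3*s^4 + (-4)*q^3*s^6 + (-6)*q^3*s^8 + (-4)*q^3*s^10 + (-1)*q^3*s^12
      = s^3 * (2*q^2 + (4/3)*q - 10/9) + s^4 * ((46/27) + (2/9)*s + (76/27)*s^2 + (4/3)*s^3 + (2/9)*s^4 + (-4/9)*s^5 + (-32/27)*s^6 + (-4/9)*s^7 + (-8/27)*s^8 + (23/9)*q + (10/3)*q*s + (38/9)*q*s^2 + (2)*q*s^3 + (1/3)*q*s^4 + (-2/3)*q*s^5 + (-16/9)*q*s^6 + (-2/3)*q*s^7 + (-4/9)*q*s^8 + (-2/3)*q^2 + (5)*q^2*s + (-8/3)*q^2*s^2 + (3)*q^2*s^3 + (-4)*q^2*s^4 + (-1)*q^2*s^5 + (-8/3)*q^2*s^6 + (-1)*q^2*s^7 + (-2/3)*q^2*s^8 + (-1)*q^3 + (-4)*q^3*s^2 + (-6)*q^3*s^4 + (-4)*q^3*s^6 + (-1)*q^3*s^8) := by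
    ring
  rw [hid]
  have h4 : s^4 < s^3 * (1/5120) := by nlinarith [pow_pos h0 3]
  nlinarith [pow_pos h0 3, pow_pos h0 4,
    mul_le_mul_of_nonneg_left hA (pow_pos h0 3).le,
    mul_le_mul_of_nonneg_left hR (pow_pos h0 4).le]

lemma E_pos (s : ℝ) (h0 : 0 < s) (h1 : s < 1/5120) :
    0 < (10/27)*s^3 + (-92/81)*s^4 + (-4/27)*s^5 + (-152/81)*s^6 + (-8/9)*s^7 + (-4/27)*s^8
      + (8/27)*s^9 + (64/81)*s^10 + (8/27)*s^11 + (16/81)*s^12 := by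
  nlinarith [pow_pos h0 3, pow_pos h0 4, pow_pos h0 5, pow_pos h0 6, pow_pos h0 7,
    pow_pos h0 8, pow_pos h0 9, pow_pos h0 10, pow_pos h0 11, pow_pos h0 12,
    mul_lt_mul_of_pos_left h1 (pow_pos h0 3),
    mul_lt_mul_of_pos_left h1 (pow_pos h0 4),
    mul_lt_mul_of_pos_left h1 (pow_pos h0 5),
    mul_lt_mul_of_pos_left h1 (pow_pos h0 6),
    mul_lt_mul_of_pos_left h1 (pow_pos h0 7)]

/-- For `γ = K⁻²/100` and `c = 1 + q√γ` with `1/2 < q ≤ 2/3`, the two-step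
factor expands: `f(γ,c) ≥ f(γ, 1 + (2/3)√γ) > 1 + (10/27)γ^{3/2}`. -/
theorem two_step_expansion_small_q (K γ q c : ℝ) (hK : 512 < K)
    (hγ : γ = (1 / K ^ 2) / 100) (hq1 : 1/2 < q) (hq2 : q ≤ 2/3)
    (hc : c = 1 + q * Real.sqrt γ) :
    f γ c ≥ f γ (1 + (2/3) * Real.sqrt γ) ∧
    f γ (1 + (2/3) * Real.sqrt γ) > 1 + (10/27) * Real.sqrt γ ^ 3 := by
  have hK0 : (0:ℝ) < K := by linarith
  have hγ0 : 0 < γ := by rw [hγ]; positivity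
  set s := Real.sqrt γ with hsdef
  have hγs : γ = s^2 := (Real.sq_sqrt hγ0.le).symm
  have hs0 : 0 < s := Real.sqrt_pos.mpr hγ0
  have hslt : s < 1/5120 := by
    have hK2 : (262144:ℝ) < K^2 := by nlinarith
    have hγlt : γ < (1/5120)^2 := by
      rw [hγ]
      rw [div_lt_iff₀ (by norm_num : (0:ℝ) < 100)] at *
      rw [div_lt_iff₀ (by positivity : (0:ℝ) < K^2)]
      nlinarith
    nlinarith [Real.sq_sqrt hγ0.le]
  constructor
  · have h1 : f γ c - f γ (1 + (2/3) * s) = (2/3 - q) *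
        ((-10/9)*s^3 + (46/27)*s^4 + (2/9)*s^5 + (76/27)*s^6 + (4/3)*s^7 + (2/9)*s^8 + (-4/9)*s^9 + (-32/27)*s^10 + (-4/9)*s^11 + (-8/27)*s^12
      + (4/3)*q*s^3 + (23/9)*q*s^4 + (10/3)*q*s^5 + (38/9)*q*s^6 + (2)*q*s^7 + (1/3)*q*s^8 + (-2/3)*q*s^9 + (-16/9)*q*s^10 + (-2/3)*q*s^11 + (-4/9)*q*s^12
      + (2)*q^2*s^3 + (-2/3)*q^2*s^4 + (5)*q^2*s^5 + (-8/3)*q^2*s^6 + (3)*q^2*s^7 + (-4)*q^2*s^8 + (-1)*q^2*s^9 + (-8/3)*q^2*s^10 + (-1)*q^2*s^11 + (-2/3)*q^2*s^12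
      + (-1)*q^3*s^4 + (-4)*q^3*s^6 + (-6)*q^3*s^8 + (-4)*q^3*s^10 + (-1)*q^3*s^12) := by
      simp only [f, hc, hγs]
      ring
    have hP := P_nonneg q s hq1 hq2 hs0 hslt
    have := mul_nonneg (by linarith : (0:ℝ) ≤ 2/3 - q) hP
    linarith
  · have h2 : f γ (1 + (2/3) * s) - (1 + (10/27) * s^3) =
        (10/27)*s^3 + (-92/81)*s^4 + (-4/27)*s^5 + (-152/81)*s^6 + (-8/9)*s^7 + (-4/27)*s^8
      + (8/27)*s^9 + (64/81)*s^10 + (8/27)*s^11 + (16/81)*s^12 := by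
      simp only [f, hγs]
      ring
    have hE := E_pos s hs0 hslt
    linarith
end

section
/- Let γ = K^{-2}/100 with K > 512 and η < K^{-4}/8000000. For c = 1 + q√γ with 2/3 < q < 30 + 40K^{-1}, one has f(γ,c) > 1 - 100000·γ^{3/2}, and consequently ((1 - 100000γ^{3/2})² - 200η²)·(1 + (2/3)√γ) > 1 + K^{-1}/20. -/
set_option maxHeartbeats 1000000 in
/-- For `γ = K⁻²/100` and `c = 1 + q√γ` with `2/3 < q < 30 + 40K⁻¹`, the
two-step factor satisfies `f(γ,c) > 1 - 100000 γ^{3/2}`, and the even-step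
lower bound `c_{t+2k} > 1 + K⁻¹/20` follows. -/
theorem two_step_lower_large_q (K γ η q c : ℝ) (hK : 512 < K)
    (hγ : γ = (1 / K ^ 2) / 100) (hη : 0 < η) (hη2 : η < (1 / K ^ 4) / 8000000)
    (hq1 : 2/3 < q) (hq2 : q < 30 + 40 * (1 / K))
    (hc : c = 1 + q * Real.sqrt γ) :
    f γ c > 1 - 100000 * Real.sqrt γ ^ 3 ∧
    ((1 - 100000 * Real.sqrt γ ^ 3) ^ 2 - 200 * η ^ 2) *
        (1 + (2/3) * Real.sqrt γ) > 1 + (1 / K) / 20 := by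
  have hK0 : (0:ℝ) < K := by linarith
  set k : ℝ := 1/K with hkdef
  have hk0 : 0 < k := by positivity
  have hk1 : k < 1/512 := by
    rw [hkdef, div_lt_div_iff₀ hK0 (by norm_num)]; linarith
  have hγ' : γ = (k/10)^2 := by rw [hγ, hkdef]; field_simp; ring
  have hs : Real.sqrt γ = k/10 := by
    rw [hγ']; exact Real.sqrt_sq (by positivity)
  have hη2' : η < k^4/8000000 := by
    have : (1:ℝ)/K^4 = k^4 := by rw [hkdef]; field_simp
    rw [this] at hη2; exact hη2
  constructor
  · rw [f, hc, hs, hγ']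
    have hq0 : (0:ℝ) < q := by linarith
    have hq31 : q < 31 := by linarith
    have hq2b : q^2 < 961 := by nlinarith
    have hq3b : q^3 < 29791 := by nlinarith
    have hk3 : (0:ℝ) < k^3 := by positivity
    have hk2b : k^2 < (1/512)^2 := by nlinarith
    have hk3b : k^3 < (1/512)^3 := by nlinarith
    have hk4b : k^4 < (1/512)^4 := by nlinarith [hk2b, sq_nonneg k, mul_pos hk0 hk0]
    have hk5b : k^5 < (1/512)^5 := by nlinarith [hk4b, mul_pos (mul_pos hk0 hk0) (mul_pos hk0 hk0)]
    have hb1 : k*q^2 < (1/512)*961 := mul_lt_mul'' hk1 hq2b hk0.le (sq_nonneg q)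
    have hb2 : k^2*q^3 < (1/512)^2*29791 := mul_lt_mul'' hk2b hq3b (by positivity) (by positivity)
    have hb3 : k^3*q^2 < (1/512)^3*961 := mul_lt_mul'' hk3b hq2b (by positivity) (sq_nonneg q)
    have hb4 : k^4*q^3 < (1/512)^4*29791 := mul_lt_mul'' hk4b hq3b (by positivity) (by positivity)
    have hb5 : k^5*q^2 < (1/512)^5*961 := mul_lt_mul'' hk5b hq2b (by positivity) (sq_nonneg q)
    have hG : (0:ℝ) < 100 + q/500 - q^3/500 - 3*k*q^2/10000 + k*q^4/10000
        + k^2*q/50000 - k^2*q^3/20000 - 3*k^3*q^2/500000 + k^3*q^4/250000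
        - 3*k^4*q^3/10000000 - 3*k^5*q^2/100000000 + 3*k^5*q^4/50000000
        + k^6*q^3/1000000000 + k^7*q^4/2500000000 + k^8*q^3/100000000000
        + k^9*q^4/1000000000000 := by
      linarith [hq3b, hb1, hb2, hb3, hb4, hb5, hq0,
        mul_pos hk0 (pow_pos hq0 4), mul_pos (pow_pos hk0 2) hq0,
        mul_pos (pow_pos hk0 3) (pow_pos hq0 4), mul_pos (pow_pos hk0 5) (pow_pos hq0 4),
        mul_pos (pow_pos hk0 6) (pow_pos hq0 3), mul_pos (pow_pos hk0 7) (pow_pos hq0 4),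
        mul_pos (pow_pos hk0 8) (pow_pos hq0 3), mul_pos (pow_pos hk0 9) (pow_pos hq0 4)]
    nlinarith [mul_pos hk3 hG, hk3, hG]
  · rw [hs]
    have hηsq : η * η < (k^4/8000000) * (k^4/8000000) :=
      mul_lt_mul'' hη2' hη2' hη.le hη.le
    have hA : (1 - 100000*(k/10)^3)^2 - 200*η^2 ≥ 1 - 201*k^3 := by
      have hk5 : k^5 < 1 := pow_lt_one₀ hk0.le (by linarith) (by norm_num)
      nlinarith [hηsq, hk0, hk1, mul_pos hk0 hk0, mul_pos (mul_pos hk0 hk0) hk0,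
        sq_nonneg (k^3), hk5]
    have hB : (0:ℝ) ≤ 1 + (2/3)*(k/10) := by positivity
    have hAB := mul_le_mul_of_nonneg_right hA hB
    have hfin : (1-201*k^3)*(1+(2/3)*(k/10)) > 1 + k/20 := by
      nlinarith [hk0, hk1, mul_pos hk0 hk0, mul_pos (mul_pos hk0 hk0) hk0,
        mul_lt_mul_of_pos_left hk1 (mul_pos hk0 hk0),
        mul_lt_mul_of_pos_left hk1 (mul_pos (mul_pos hk0 hk0) hk0)]
    linarith
end
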